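/- arXiv:1308.5516 — 5 statements merged into one kernel-verified Lean document; each statement's English description precedes it below -/
import Mathlib

section
/- Let ρ be the semicircle law and let k ≥ 1. Let D_k^{(G)} be the k×k matrix with entries (D_k^{(G)})_{i,j} = C(i,(i−j)/2) − C(i,(i−j)/2−1) when 1 ≤ j ≤ i ≤ k and i+j is even, and 0 otherwise. Then for all 1 ≤ i, j ≤ k, (D_k^{(G)} (D_k^{(G)})^T)_{i,j} = m_{i+j}(ρ) − m_i(ρ)·m_j(ρ). -/
/-
The entry `DGauss k i j` is the ballot number `ballot (i+1) (j+1)`, the number of walks of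
length `i+1` on the path graph `ℕ` from `0` to `j+1`: by the reflection principle this is
`C(n, q) - C(n, q-1)` with `n - 2q` the endpoint. Reversing the second walk, the sum
`∑_{l ≥ 0} ballot i l * ballot j l` counts the closed walks at `0` of length `i + j`;
algebraically this is the symmetry of the adjacency operator of `ℕ`. Closed walks of length
`2t` are counted by the Catalan number `catalan t`, which is also the moment `m_{2t}(ρ)`: both
satisfy the recursion `(r + 4) m_{r+2} = 4 (r + 1) m_r`, which for `ρ` comes from
differentiating `(4 - x²)^{3/2} x^{r+1}`. The covariance discards the term `l = 0`, which is
`m_i(ρ) m_j(ρ)`.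
-/

open MeasureTheory Matrix

/-- The semicircle law `ρ(dx) = (1/(2π))·√(4−x²)·1_{[−2,2]}(x) dx`. -/
noncomputable def semicircle : Measure ℝ :=
  volume.withDensity fun x =>
    ENNReal.ofReal (if x ∈ Set.Icc (-2 : ℝ) 2 then Real.sqrt (4 - x ^ 2) / (2 * Real.pi) else 0)

/-- The `r`-th moment of the semicircle law. -/
noncomputable def mSC (r : ℕ) : ℝ := ∫ x, x ^ r ∂semicircle

/-- Binomial coefficient `C(n, r)` with an integer lower argument,
with the convention `C(n, r) = 0` for `r < 0`. -/
noncomputable def chooseZ (n : ℕ) (r : ℤ) : ℝ :=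
  if 0 ≤ r then (n.choose r.toNat : ℝ) else 0

/-- The matrix `D_k^{(G)}` (indices `1 ≤ i, j ≤ k`, here realised by `Fin k` with
`i ↦ i+1`): entries `C(i, (i−j)/2) − C(i, (i−j)/2 − 1)` when `j ≤ i` and `i + j` is
even, and `0` otherwise. -/
noncomputable def DGauss (k : ℕ) : Matrix (Fin k) (Fin k) ℝ := fun i j =>
  if j.1 ≤ i.1 ∧ (i.1 + j.1) % 2 = 0 then
    chooseZ (i.1 + 1) ((((i.1 : ℤ) + 1) - ((j.1 : ℤ) + 1)) / 2) -
      chooseZ (i.1 + 1) ((((i.1 : ℤ) + 1) - ((j.1 : ℤ) + 1)) / 2 - 1)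
  else 0

open Finset Real

def halfLineAdj (f : ℕ → ℝ) : ℕ → ℝ
  | 0 => f 1
  | l + 1 => f l + f (l + 2)

def ballot : ℕ → ℕ → ℝ
  | 0 => fun l => if l = 0 then 1 else 0
  | n + 1 => halfLineAdj (ballot n)

@[simp] lemma ballot_zero_zero : ballot 0 0 = 1 := rfl

@[simp] lemma ballot_zero_succ (l : ℕ) : ballot 0 (l + 1) = 0 := rfl

@[simp] lemma ballot_succ_zero (n : ℕ) : ballot (n + 1) 0 = ballot n 1 := rfl

@[simp] lemma ballot_succ_succ (n l : ℕ) :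
    ballot (n + 1) (l + 1) = ballot n l + ballot n (l + 2) := rfl

lemma ballot_eq_zero_of_lt {n l : ℕ} (h : n < l) : ballot n l = 0 := by
  induction n generalizing l with
  | zero => obtain ⟨l, rfl⟩ := Nat.exists_eq_succ_of_ne_zero h.ne'; rfl
  | succ n ih =>
    obtain ⟨l, rfl⟩ := Nat.exists_eq_succ_of_ne_zero (by omega : l ≠ 0)
    rw [ballot_succ_succ, ih (by omega), ih (by omega), add_zero]

lemma ballot_eq_zero_of_odd {n l : ℕ} (h : Odd (n + l)) : ballot n l = 0 := by
  rw [Nat.odd_iff] at h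
  induction n generalizing l with
  | zero => obtain ⟨l, rfl⟩ := Nat.exists_eq_succ_of_ne_zero (by omega : l ≠ 0); rfl
  | succ n ih =>
    rcases l with _ | l
    · exact ih (by omega)
    · rw [ballot_succ_succ, ih (by omega), ih (by omega), add_zero]

lemma chooseZ_succ (n : ℕ) (q : ℤ) : chooseZ (n + 1) q = chooseZ n (q - 1) + chooseZ n q := by
  unfold chooseZ
  rcases lt_or_ge q 0 with hq | hq
  · rw [if_neg hq.not_ge, if_neg hq.not_ge, if_neg (by omega), add_zero]
  obtain ⟨_ | q, rfl⟩ := Int.eq_ofNat_of_zero_le hq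
  · simp
  · rw [if_pos hq, if_pos hq, if_pos (by omega), Nat.cast_add, Nat.cast_one, add_sub_cancel_right,
      Int.toNat_natCast, show ((q : ℤ) + 1).toNat = q + 1 by omega, Nat.choose_succ_succ,
      Nat.cast_add]

lemma chooseZ_natCast (n k : ℕ) : chooseZ n k = n.choose k := by
  simp [chooseZ]

lemma chooseZ_of_neg (n : ℕ) {q : ℤ} (hq : q < 0) : chooseZ n q = 0 :=
  if_neg hq.not_ge

lemma ballot_eq_chooseZ {n l : ℕ} (h : Even (n + l)) :
    ballot n l = chooseZ n (((n : ℤ) - l) / 2) - chooseZ n (((n : ℤ) - l) / 2 - 1) := by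
  rw [Nat.even_iff] at h
  induction n generalizing l with
  | zero =>
    rcases l with _ | l
    · simp [chooseZ]
    · rw [ballot_zero_succ, chooseZ_of_neg _ (by omega), chooseZ_of_neg _ (by omega), sub_zero]
  | succ n ih =>
    rcases l with _ | l
    · obtain ⟨m, rfl⟩ : ∃ m, n = 2 * m + 1 := ⟨n / 2, by omega⟩
      have hsymm : chooseZ (2 * m + 1) ((m : ℤ) + 1) = chooseZ (2 * m + 1) m := by
        rw [← Nat.cast_succ, chooseZ_natCast, chooseZ_natCast, Nat.choose_symm_half]
      rw [ballot_succ_zero, ih (by omega),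
        show (((2 * m + 1 : ℕ) : ℤ) - (1 : ℕ)) / 2 = m by omega,
        show (((2 * m + 1 + 1 : ℕ) : ℤ) - (0 : ℕ)) / 2 = m + 1 by omega,
        chooseZ_succ (2 * m + 1), chooseZ_succ (2 * m + 1), add_sub_cancel_right, hsymm]
      ring
    · set q : ℤ := ((n : ℤ) - l) / 2
      rw [ballot_succ_succ, ih (by omega), ih (by omega),
        show ((n : ℤ) - (l + 2 : ℕ)) / 2 = q - 1 by omega,
        show (((n + 1 : ℕ) : ℤ) - (l + 1 : ℕ)) / 2 = q by omega,
        chooseZ_succ n, chooseZ_succ n]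
      ring

lemma DGauss_apply (k : ℕ) (i j : Fin k) : DGauss k i j = ballot (i + 1) (j + 1) := by
  unfold DGauss
  split_ifs with h
  · rw [ballot_eq_chooseZ (Nat.even_iff.2 (by omega))]
    push_cast
    rfl
  · rcases Nat.lt_or_ge i.1 j.1 with hij | hij
    · exact (ballot_eq_zero_of_lt (by omega)).symm
    · exact (ballot_eq_zero_of_odd (Nat.odd_iff.2 (by omega))).symm

lemma sum_range_halfLineAdj_mul (f g : ℕ → ℝ) (N : ℕ) :
    ∑ l ∈ range (N + 1), halfLineAdj f l * g l =
      ∑ l ∈ range N, (f (l + 1) * g l + f l * g (l + 1)) + f (N + 1) * g N := by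
  induction N with
  | zero => simp [halfLineAdj]
  | succ N ih =>
    rw [sum_range_succ, ih, sum_range_succ]
    simp only [halfLineAdj]
    ring

lemma sum_range_halfLineAdj_mul_comm (f g : ℕ → ℝ) {N : ℕ} (hN : f N = 0)
    (hN' : f (N + 1) = 0) :
    ∑ l ∈ range (N + 1), halfLineAdj f l * g l =
      ∑ l ∈ range (N + 1), f l * halfLineAdj g l := by
  simp_rw [mul_comm (f _) (halfLineAdj g _)]
  rw [sum_range_halfLineAdj_mul, sum_range_halfLineAdj_mul, hN, hN', zero_mul, mul_zero]
  exact congrArg (· + 0) (sum_congr rfl fun l _ => by ring)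

lemma sum_ballot_mul_ballot {m N : ℕ} (hm : m ≤ N) (n : ℕ) :
    ∑ l ∈ range (N + 1), ballot m l * ballot n l = ballot (m + n) 0 := by
  induction m generalizing n with
  | zero => simp [sum_range_succ']
  | succ m ih =>
    rw [show ballot (m + 1) = halfLineAdj (ballot m) from rfl,
      sum_range_halfLineAdj_mul_comm _ _ (ballot_eq_zero_of_lt (by omega))
        (ballot_eq_zero_of_lt (by omega)), add_right_comm]
    exact ih (by omega) (n + 1)

lemma succ_mul_ballot_two_mul_zero (t : ℕ) : (t + 1) * ballot (2 * t) 0 = (2 * t).choose t := by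
  rw [ballot_eq_chooseZ (by simp), show (((2 * t : ℕ) : ℤ) - (0 : ℕ)) / 2 = t by omega]
  rcases t with _ | s
  · simp [chooseZ]
  · have h := Nat.choose_succ_right_eq (2 * (s + 1)) s
    rw [show 2 * (s + 1) - s = s + 2 by omega] at h
    rw [show ((s + 1 : ℕ) : ℤ) - 1 = s by omega, chooseZ_natCast, chooseZ_natCast]
    have h' : ((2 * (s + 1)).choose (s + 1) : ℝ) * (s + 1) =
        ((2 * (s + 1)).choose s) * (s + 2) := by
      exact_mod_cast h
    push_cast
    linear_combination h'

lemma ballot_two_mul_zero (t : ℕ) : ballot (2 * t) 0 = catalan t := by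
  have h := succ_mul_ballot_two_mul_zero t
  rw [← Nat.centralBinom_eq_two_mul_choose, ← succ_mul_catalan_eq_centralBinom] at h
  push_cast at h
  exact mul_left_cancel₀ (by positivity) h

lemma mSC_eq_intervalIntegral (r : ℕ) :
    mSC r = (∫ x in (-2 : ℝ)..2, √(4 - x ^ 2) * x ^ r) / (2 * π) := by
  have hmeas : Measurable fun x : ℝ =>
      if x ∈ Set.Icc (-2 : ℝ) 2 then √(4 - x ^ 2) / (2 * π) else 0 :=
    Measurable.ite measurableSet_Icc (by fun_prop) measurable_const
  rw [mSC, semicircle, integral_withDensity_eq_integral_toReal_smul hmeas.ennreal_ofReal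
      (ae_of_all _ fun _ => ENNReal.ofReal_lt_top),
    intervalIntegral.integral_of_le (by norm_num), ← integral_Icc_eq_integral_Ioc,
    ← integral_div, ← integral_indicator measurableSet_Icc]
  congr 1 with x
  by_cases hx : x ∈ Set.Icc (-2 : ℝ) 2
  · rw [if_pos hx, Set.indicator_of_mem hx, ENNReal.toReal_ofReal (by positivity), smul_eq_mul]
    ring
  · simp [hx]

lemma integral_sqrt_four_sub_sq : ∫ x in (-2 : ℝ)..2, √(4 - x ^ 2) = 2 * π := by
  have hscale (x : ℝ) : √(4 - (2 * x) ^ 2) = 2 * √(1 - x ^ 2) := by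
    rw [show 4 - (2 * x) ^ 2 = 2 ^ 2 * (1 - x ^ 2) by ring, sqrt_mul (by norm_num),
      sqrt_sq (by norm_num)]
  have h := intervalIntegral.integral_comp_mul_left (fun x => √(4 - x ^ 2)) (c := 2)
    (a := -1) (b := 1) two_ne_zero
  simp only [hscale, intervalIntegral.integral_const_mul, integral_sqrt_one_sub_sq] at h
  norm_num at h
  linarith

lemma integral_sqrt_four_sub_sq_mul_pow_odd (n : ℕ) :
    ∫ x in (-2 : ℝ)..2, √(4 - x ^ 2) * x ^ (2 * n + 1) = 0 := by
  have h := intervalIntegral.integral_comp_neg (a := -2) (b := 2)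
    (fun x : ℝ => √(4 - x ^ 2) * x ^ (2 * n + 1))
  simp only [neg_sq, Odd.neg_pow (odd_two_mul_add_one n), mul_neg, intervalIntegral.integral_neg,
    neg_neg] at h
  linarith

lemma hasDerivAt_four_sub_sq_mul_sqrt_mul_pow (r : ℕ) {x : ℝ}
    (hx : x ∈ Set.Ioo (-2 : ℝ) 2) :
    HasDerivAt (fun x => (4 - x ^ 2) * √(4 - x ^ 2) * x ^ (r + 1))
      (4 * (r + 1) * (√(4 - x ^ 2) * x ^ r) - (r + 4) * (√(4 - x ^ 2) * x ^ (r + 2))) x := by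
  have hpos : 0 < 4 - x ^ 2 := by nlinarith [hx.1, hx.2]
  have hq : HasDerivAt (fun x : ℝ => 4 - x ^ 2) (-(2 * x)) x := by
    simpa using (hasDerivAt_pow 2 x).const_sub 4
  refine ((hq.mul (hq.sqrt hpos.ne')).mul (hasDerivAt_pow (r + 1) x)).congr_deriv ?_
  have hsq : √(4 - x ^ 2) ^ 2 = 4 - x ^ 2 := sq_sqrt hpos.le
  field_simp
  simp only [Pi.mul_apply, add_tsub_cancel_right]
  push_cast
  linear_combination x ^ (r + 2) * hsq

lemma integral_sqrt_four_sub_sq_mul_pow_add_two (r : ℕ) :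
    (r + 4) * ∫ x in (-2 : ℝ)..2, √(4 - x ^ 2) * x ^ (r + 2) =
      4 * (r + 1) * ∫ x in (-2 : ℝ)..2, √(4 - x ^ 2) * x ^ r := by
  have hcont (s : ℕ) : Continuous fun x : ℝ => √(4 - x ^ 2) * x ^ s := by fun_prop
  have hFTC := intervalIntegral.integral_eq_sub_of_hasDerivAt_of_le (by norm_num : (-2 : ℝ) ≤ 2)
    (by fun_prop) (fun x hx => hasDerivAt_four_sub_sq_mul_sqrt_mul_pow r hx)
    ((by fun_prop : Continuous _).intervalIntegrable _ _)
  rw [intervalIntegral.integral_sub (((hcont r).intervalIntegrable _ _).const_mul _)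
      (((hcont (r + 2)).intervalIntegrable _ _).const_mul _), intervalIntegral.integral_const_mul,
    intervalIntegral.integral_const_mul] at hFTC
  norm_num at hFTC
  linarith

lemma mSC_zero : mSC 0 = 1 := by
  simp [mSC_eq_intervalIntegral, integral_sqrt_four_sub_sq, pi_ne_zero]

lemma mSC_odd (n : ℕ) : mSC (2 * n + 1) = 0 := by
  rw [mSC_eq_intervalIntegral, integral_sqrt_four_sub_sq_mul_pow_odd, zero_div]

lemma mSC_add_two (r : ℕ) : (r + 4) * mSC (r + 2) = 4 * (r + 1) * mSC r := by
  simp only [mSC_eq_intervalIntegral, mul_div_assoc', integral_sqrt_four_sub_sq_mul_pow_add_two]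

lemma catalan_succ_mul (t : ℕ) : (t + 2) * catalan (t + 1) = 2 * (2 * t + 1) * catalan t := by
  have h := Nat.succ_mul_centralBinom_succ t
  rw [← succ_mul_catalan_eq_centralBinom, ← succ_mul_catalan_eq_centralBinom] at h
  apply Nat.eq_of_mul_eq_mul_left (Nat.succ_pos t)
  linarith

lemma mSC_two_mul (t : ℕ) : mSC (2 * t) = catalan t := by
  induction t with
  | zero => simp [mSC_zero]
  | succ t ih =>
    have hrec := mSC_add_two (2 * t)
    have hcat : ((t + 2) * catalan (t + 1) : ℝ) = 2 * (2 * t + 1) * catalan t := by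
      exact_mod_cast catalan_succ_mul t
    rw [ih, show 2 * t + 2 = 2 * (t + 1) by ring] at hrec
    push_cast at hrec
    refine mul_left_cancel₀ (by positivity : (2 * (t : ℝ) + 4) ≠ 0) ?_
    linear_combination hrec - 2 * hcat

lemma mSC_eq_ballot (n : ℕ) : mSC n = ballot n 0 := by
  obtain ⟨t, rfl | rfl⟩ := Nat.even_or_odd' n
  · rw [mSC_two_mul, ballot_two_mul_zero]
  · rw [mSC_odd, ballot_eq_zero_of_odd (by simp)]

theorem DGauss_mul_transpose_eq_semicircle_cov_general (k : ℕ) (i j : Fin k) :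
    (DGauss k * (DGauss k)ᵀ) i j =
      mSC ((i.1 + 1) + (j.1 + 1)) - mSC (i.1 + 1) * mSC (j.1 + 1) := by
  calc (DGauss k * (DGauss k)ᵀ) i j
      = ∑ l ∈ range k, ballot (i + 1) (l + 1) * ballot (j + 1) (l + 1) := by
        simp only [mul_apply, transpose_apply, DGauss_apply]
        exact Fin.sum_univ_eq_sum_range (fun l => ballot (i + 1) (l + 1) * ballot (j + 1) (l + 1))
          k
    _ = ∑ l ∈ range (k + 1), ballot (i + 1) l * ballot (j + 1) l
          - ballot (i + 1) 0 * ballot (j + 1) 0 := by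
        rw [sum_range_succ']
        ring
    _ = _ := by rw [sum_ballot_mul_ballot i.isLt, mSC_eq_ballot, mSC_eq_ballot, mSC_eq_ballot]

/-- The covariance representation for the Gaussian ensemble:
`(D_k^{(G)} (D_k^{(G)})^T)_{i,j} = m_{i+j}(ρ) − m_i(ρ)·m_j(ρ)`, where `ρ` is the
semicircle law. -/
theorem DGauss_mul_transpose_eq_semicircle_cov (k : ℕ) (hk : 1 ≤ k) (i j : Fin k) :
    (DGauss k * (DGauss k)ᵀ) i j =
      mSC ((i.1 + 1) + (j.1 + 1)) - mSC (i.1 + 1) * mSC (j.1 + 1) :=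
  DGauss_mul_transpose_eq_semicircle_cov_general k i j
end

section
/- Let σ be a probability measure on ℝ with compact support whose support is an infinite set, and let (p_k)_{k≥0} be the orthonormal polynomials of σ: p_k is a real polynomial of degree k with positive leading coefficient and ∫ p_k(x)p_l(x) σ(dx) = δ_{k,l} for all k, l ≥ 0. Let μ be a finite signed measure on ℝ with compact support and μ(ℝ) = 0, and suppose μ is NOT absolutely continuous with respect to σ. Then Σ_{k=0}^∞ (∫ p_k(x) μ(dx))² = ∞. -/
/-!
If `∑ₖ (∫ pₖ dμ)²` were finite, the Riesz–Fischer theorem would give `G ∈ L²(σ)` whose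
coefficients against the orthonormal family `(pₖ)` are the numbers `∫ pₖ dμ`. The `pₖ` span all
polynomials, so `μ` and `G • σ` have the same polynomial moments; both live on a compact set, where
polynomials are uniformly dense in the continuous functions, so `μ = G • σ ≪ σ`.
-/

open MeasureTheory

/-- The integral `∫ f dμ` of a function against a signed measure `μ`, defined via the
Jordan decomposition `μ = μ⁺ − μ⁻`. -/
noncomputable def signedIntegral (μ : SignedMeasure ℝ) (f : ℝ → ℝ) : ℝ :=
  (∫ x, f x ∂μ.toJordanDecomposition.posPart) - ∫ x, f x ∂μ.toJordanDecomposition.negPart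

/-- The topological support of a measure `σ` on `ℝ`: points all of whose
neighbourhoods have positive measure. -/
def measSupport (σ : Measure ℝ) : Set ℝ :=
  {x : ℝ | ∀ U ∈ nhds x, 0 < σ U}

open Polynomial
open scoped ENNReal InnerProductSpace

theorem Orthonormal.exists_inner_eq_of_summable {𝕜 E ι : Type*} [RCLike 𝕜]
    [NormedAddCommGroup E] [InnerProductSpace 𝕜 E] [CompleteSpace E] {e : ι → E}
    (he : Orthonormal 𝕜 e) {c : ι → 𝕜} (hc : Summable fun i => ‖c i‖ ^ 2) :
    ∃ g : E, ∀ i, ⟪e i, g⟫_𝕜 = c i := by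
  classical
  have hsum : Summable fun i => c i • e i := by
    simpa using (he.orthogonalFamily.summable_iff_norm_sq_summable c).2 hc
  refine ⟨∑' i, c i • e i, fun j => ?_⟩
  rw [← innerSL_apply_apply (𝕜 := 𝕜), (innerSL 𝕜 (e j)).map_tsum hsum]
  simp_rw [innerSL_apply_apply, inner_smul_right, orthonormal_iff_ite.1 he, mul_ite, mul_one,
    mul_zero]
  simp

namespace MeasureTheory

theorem SignedMeasure.totalVariation_eq_zero_of_restrict_eq_zero {α : Type*}
    [MeasurableSpace α] {s : SignedMeasure α} {S : Set α} (hS : MeasurableSet S)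
    (h : s.restrict S = 0) : s.totalVariation S = 0 := by
  have hnull : ∀ T, MeasurableSet T → s (T ∩ S) = 0 := fun T hT => by
    rw [← VectorMeasure.restrict_apply s hS hT, h, zero_apply]
  obtain ⟨i, hi, hi₂, hi₃, hpos, hneg⟩ := s.toJordanDecomposition_spec
  rw [SignedMeasure.totalVariation, Measure.add_apply, hpos, hneg,
    SignedMeasure.toMeasureOfZeroLE_apply _ _ _ hS,
    SignedMeasure.toMeasureOfLEZero_apply _ _ _ hS]
  simp [hnull i hi, hnull iᶜ hi.compl]

section L2

variable {α : Type*} [MeasurableSpace α] {σ : Measure α}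

theorem MemLp.inner_toLp_eq_integral_mul {f : α → ℝ} (hf : MemLp f 2 σ) (g : Lp ℝ 2 σ) :
    ⟪hf.toLp f, g⟫_ℝ = ∫ x, f x * g x ∂σ := by
  rw [L2.inner_def]
  refine integral_congr_ae ?_
  filter_upwards [hf.coeFn_toLp] with x hx
  simp [hx, mul_comm]

theorem exists_memLp_integral_mul_eq_of_orthonormal {ι : Type*} [DecidableEq ι]
    {φ : ι → α → ℝ} (hφ : ∀ k, MemLp (φ k) 2 σ)
    (horth : ∀ k l, ∫ x, φ k x * φ l x ∂σ = if k = l then 1 else 0)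
    {c : ι → ℝ} (hc : Summable fun k => c k ^ 2) :
    ∃ G : α → ℝ, MemLp G 2 σ ∧ ∀ k, ∫ x, φ k x * G x ∂σ = c k := by
  set e : ι → Lp ℝ 2 σ := fun k => (hφ k).toLp
  have he : Orthonormal ℝ e := by
    refine orthonormal_iff_ite.2 fun k l => ?_
    rw [← horth k l, MemLp.inner_toLp_eq_integral_mul]
    refine integral_congr_ae ?_
    filter_upwards [(hφ l).coeFn_toLp] with x hx
    rw [hx]
  obtain ⟨g, hg⟩ := he.exists_inner_eq_of_summable (c := c) (by simpa using hc)
  exact ⟨g, Lp.memLp g, fun k => by rw [← hg k, MemLp.inner_toLp_eq_integral_mul]⟩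

theorem integral_mul_eq_integral_withDensity_sub {f G : α → ℝ} (hf : MemLp f ∞ σ)
    (hG : Integrable G σ) :
    ∫ x, f x * G x ∂σ = ∫ x, f x ∂σ.withDensity (fun x => ENNReal.ofReal (G x))
      - ∫ x, f x ∂σ.withDensity (fun x => ENNReal.ofReal (-G x)) := by
  have hdens : ∀ H : α → ℝ, Integrable H σ →
      ∫ x, f x ∂σ.withDensity (fun x => ENNReal.ofReal (H x)) = ∫ x, max (H x) 0 * f x ∂σ :=
    fun H hH => integral_withDensity_eq_integral_toReal_smul₀
      hH.aemeasurable.ennreal_ofReal (.of_forall fun _ => ENNReal.ofReal_lt_top) f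
  have hpos : Integrable (fun x => max (G x) 0 * f x) σ := hG.pos_part.mul_of_top_left hf
  have hneg : Integrable (fun x => max (-G x) 0 * f x) σ := hG.neg_part.mul_of_top_left hf
  rw [hdens G hG, hdens (fun x => -G x) hG.neg, ← integral_sub hpos hneg]
  simp only [← sub_mul, max_zero_sub_max_neg_zero_eq_self, mul_comm (f _)]

end L2

section CompactSupport

variable {α : Type*} [MeasurableSpace α] {ν : Measure α} [IsFiniteMeasure ν] {M : Set α}

theorem _root_.Continuous.memLp_of_measure_compl_eq_zero [TopologicalSpace α]
    [OpensMeasurableSpace α] (hM : IsCompact M) (hνM : ν Mᶜ = 0) {f : α → ℝ}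
    (hf : Continuous f) (q : ℝ≥0∞) : MemLp f q ν := by
  obtain ⟨C, hC⟩ := hM.exists_bound_of_continuousOn hf.continuousOn
  exact MemLp.of_bound hf.aestronglyMeasurable C ((ae_iff.2 hνM : ∀ᵐ x ∂ν, x ∈ M).mono hC)

theorem abs_integral_sub_le_of_forall_mem (hνM : ν Mᶜ = 0) {f g : α → ℝ} (hf : Integrable f ν)
    (hg : Integrable g ν) {ε : ℝ} (hfg : ∀ x ∈ M, |f x - g x| ≤ ε) :
    |∫ x, f x ∂ν - ∫ x, g x ∂ν| ≤ ε * ν.real Set.univ := by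
  rw [← integral_sub hf hg]
  exact norm_integral_le_of_norm_le_const (f := fun x => f x - g x)
    ((ae_iff.2 hνM : ∀ᵐ x ∂ν, x ∈ M).mono hfg)

end CompactSupport

theorem integral_eval_eq_of_sequence {ν₁ ν₂ : Measure ℝ} (S : Polynomial.Sequence ℝ)
    (h₁ : ∀ q : ℝ[X], Integrable (fun x => q.eval x) ν₁)
    (h₂ : ∀ q : ℝ[X], Integrable (fun x => q.eval x) ν₂)
    (hS : ∀ k, ∫ x, (S k).eval x ∂ν₁ = ∫ x, (S k).eval x ∂ν₂) (q : ℝ[X]) :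
    ∫ x, q.eval x ∂ν₁ = ∫ x, q.eval x ∂ν₂ := by
  have hq : q ∈ Submodule.span ℝ (Set.range S) := by
    rw [S.span fun k => (leadingCoeff_ne_zero.2 (S.ne_zero k)).isUnit]
    exact Submodule.mem_top
  induction hq using Submodule.span_induction with
  | mem _ hq => obtain ⟨k, rfl⟩ := hq; exact hS k
  | zero => simp
  | add q r _ _ hq hr =>
    simp only [eval_add]
    rw [integral_add (h₁ q) (h₁ r), integral_add (h₂ q) (h₂ r), hq, hr]
  | smul a q _ hq =>
    simp only [eval_smul, smul_eq_mul]
    rw [integral_const_mul, integral_const_mul, hq]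

theorem Measure.ext_of_integral_eval_eq {ν₁ ν₂ : Measure ℝ} [IsFiniteMeasure ν₁]
    [IsFiniteMeasure ν₂] {M : Set ℝ} (hM : IsCompact M) (h₁ : ν₁ Mᶜ = 0) (h₂ : ν₂ Mᶜ = 0)
    (h : ∀ q : ℝ[X], ∫ x, q.eval x ∂ν₁ = ∫ x, q.eval x ∂ν₂) : ν₁ = ν₂ := by
  refine ext_of_forall_integral_eq_of_IsFiniteMeasure fun f =>
    eq_of_forall_dist_le fun ε hε => ?_
  set C := ν₁.real Set.univ + ν₂.real Set.univ
  have hC : 0 ≤ C := by positivity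
  obtain ⟨q, hq⟩ := exists_polynomial_near_of_continuousOn _ _ f f.continuous.continuousOn
    (ε / (C + 1)) (by positivity)
  have hfq : ∀ x ∈ M, |f x - q.eval x| ≤ ε / (C + 1) := fun x hx => by
    rw [abs_sub_comm]; exact (hq x (hM.isBounded.subset_Icc_sInf_sSup hx)).le
  have hq_int : ∀ (ν : Measure ℝ) [IsFiniteMeasure ν], ν Mᶜ = 0 →
      Integrable (fun x => q.eval x) ν := fun ν _ hν =>
    (q.continuous.memLp_of_measure_compl_eq_zero hM hν 1).integrable le_rfl
  have e₁ := abs_integral_sub_le_of_forall_mem h₁ (f.integrable ν₁) (hq_int ν₁ h₁) hfq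
  have e₂ := abs_integral_sub_le_of_forall_mem h₂ (f.integrable ν₂) (hq_int ν₂ h₂) hfq
  rw [h q] at e₁
  rw [Real.dist_eq, ← sub_sub_sub_cancel_right _ _ (∫ x, q.eval x ∂ν₂)]
  calc _ ≤ ε / (C + 1) * C := by
        refine (abs_sub _ _).trans ?_
        simp only [C, mul_add]; linarith
    _ ≤ ε := by
        rw [div_mul_eq_mul_div, div_le_iff₀ (by positivity)]; nlinarith

theorem Measure.add_withDensity_neg_eq_add_withDensity_of_integral_eval
    (S : Polynomial.Sequence ℝ) {M : Set ℝ} (hM : IsCompact M) {ν₁ ν₂ σ : Measure ℝ}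
    [IsFiniteMeasure ν₁] [IsFiniteMeasure ν₂] [IsFiniteMeasure σ]
    (h₁ : ν₁ Mᶜ = 0) (h₂ : ν₂ Mᶜ = 0) (hσ : σ Mᶜ = 0) {G : ℝ → ℝ} (hG : Integrable G σ)
    (hS : ∀ k, ∫ x, (S k).eval x ∂ν₁ - ∫ x, (S k).eval x ∂ν₂ = ∫ x, (S k).eval x * G x ∂σ) :
    ν₁ + σ.withDensity (fun x => ENNReal.ofReal (-G x))
      = ν₂ + σ.withDensity (fun x => ENNReal.ofReal (G x)) := by
  have := isFiniteMeasure_withDensity_ofReal hG.2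
  have := isFiniteMeasure_withDensity_ofReal hG.neg.2
  have hdens : ∀ H : ℝ → ℝ, σ.withDensity (fun x => ENNReal.ofReal (H x)) Mᶜ = 0 :=
    fun H => withDensity_absolutelyContinuous σ _ hσ
  have hpoly : ∀ (ν : Measure ℝ) [IsFiniteMeasure ν], ν Mᶜ = 0 → ∀ (q : ℝ[X]) r,
      MemLp (fun x => q.eval x) r ν :=
    fun ν _ hν q => q.continuous.memLp_of_measure_compl_eq_zero hM hν
  have hint : ∀ (ν : Measure ℝ) [IsFiniteMeasure ν], ν Mᶜ = 0 → ∀ q : ℝ[X],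
      Integrable (fun x => q.eval x) ν :=
    fun ν _ hν q => (hpoly ν hν q 1).integrable le_rfl
  refine ext_of_integral_eval_eq hM (by simp [h₁, hdens]) (by simp [h₂, hdens])
    (integral_eval_eq_of_sequence S (hint _ (by simp [h₁, hdens]))
      (hint _ (by simp [h₂, hdens])) fun k => ?_)
  have hk := hS k
  rw [integral_mul_eq_integral_withDensity_sub (hpoly σ hσ (S k) ∞) hG] at hk
  rw [integral_add_measure (hint _ h₁ _) (hint _ (hdens _) _),
    integral_add_measure (hint _ h₂ _) (hint _ (hdens _) _)]
  linarith

end MeasureTheory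

theorem sum_sq_integral_orthonormal_eq_top_of_not_absolutelyContinuous_general
    (σ : Measure ℝ) [IsProbabilityMeasure σ]
    (K : Set ℝ) (hK : IsCompact K) (hσK : σ Kᶜ = 0)
    (p : ℕ → Polynomial ℝ)
    (hdeg : ∀ k, (p k).natDegree = k)
    (hlead : ∀ k, 0 < (p k).leadingCoeff)
    (horth : ∀ k l, ∫ x, (p k).eval x * (p l).eval x ∂σ = if k = l then 1 else 0)
    (μ : SignedMeasure ℝ)
    (L : Set ℝ) (hL : IsCompact L) (hμL : μ.restrict Lᶜ = 0)
    (hnac : ¬ ∀ A : Set ℝ, MeasurableSet A → σ A = 0 → μ A = 0) :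
    ∑' k : ℕ, ENNReal.ofReal ((signedIntegral μ fun x => (p k).eval x) ^ 2) = ⊤ := by
  by_contra hfin
  have hc : Summable fun k => (signedIntegral μ fun x => (p k).eval x) ^ 2 :=
    (ENNReal.summable_toReal hfin).congr fun k => ENNReal.toReal_ofReal (sq_nonneg _)
  have hM : IsCompact (K ∪ L) := hK.union hL
  have hσM : σ (K ∪ L)ᶜ = 0 :=
    measure_mono_null (Set.compl_subset_compl.2 Set.subset_union_left) hσK
  have hμM : μ.totalVariation (K ∪ L)ᶜ = 0 :=
    measure_mono_null (Set.compl_subset_compl.2 Set.subset_union_right)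
      (μ.totalVariation_eq_zero_of_restrict_eq_zero hL.isClosed.measurableSet.compl hμL)
  rw [SignedMeasure.totalVariation, Measure.add_apply, add_eq_zero] at hμM
  obtain ⟨G, hG, hGp⟩ := exists_memLp_integral_mul_eq_of_orthonormal
    (fun k => (p k).continuous.memLp_of_measure_compl_eq_zero hM hσM 2) horth hc
  let S : Polynomial.Sequence ℝ :=
    ⟨p, fun k => (degree_eq_iff_natDegree_eq (leadingCoeff_ne_zero.1 (hlead k).ne')).2 (hdeg k)⟩
  have hμ := Measure.add_withDensity_neg_eq_add_withDensity_of_integral_eval S hM hμM.1 hμM.2 hσM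
    (hG.integrable one_le_two) fun k => (hGp k).symm
  simp only [not_forall] at hnac
  obtain ⟨A, hA, hσA, hμA⟩ := hnac
  have hparts := congrArg (· A) hμ
  simp only [Measure.add_apply, withDensity_absolutelyContinuous _ _ hσA, add_zero] at hparts
  exact hμA (by rw [μ.apply_eq_posPart_real_sub_negPart_real hA, measureReal_def,
    measureReal_def, hparts, sub_self])

/-- Divergence part of Lemma 4.2: if `σ` is a compactly supported probability measure
with infinite support, `(p_k)` are its orthonormal polynomials, and `μ` is a compactly
supported signed measure with `μ(ℝ) = 0` which is NOT absolutely continuous with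
respect to `σ`, then `Σ_k (∫ p_k dμ)² = ∞`. -/
theorem sum_sq_integral_orthonormal_eq_top_of_not_absolutelyContinuous
    (σ : Measure ℝ) [IsProbabilityMeasure σ]
    (K : Set ℝ) (hK : IsCompact K) (hσK : σ Kᶜ = 0)
    (hinf : (measSupport σ).Infinite)
    (p : ℕ → Polynomial ℝ)
    (hdeg : ∀ k, (p k).natDegree = k)
    (hlead : ∀ k, 0 < (p k).leadingCoeff)
    (horth : ∀ k l, ∫ x, (p k).eval x * (p l).eval x ∂σ = if k = l then 1 else 0)
    (μ : SignedMeasure ℝ)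
    (L : Set ℝ) (hL : IsCompact L) (hμL : μ.restrict Lᶜ = 0)
    (hzero : μ Set.univ = 0)
    (hnac : ¬ ∀ A : Set ℝ, MeasurableSet A → σ A = 0 → μ A = 0) :
    ∑' k : ℕ, ENNReal.ofReal ((signedIntegral μ fun x => (p k).eval x) ^ 2) = ⊤ :=
  sum_sq_integral_orthonormal_eq_top_of_not_absolutelyContinuous_general σ K hK hσK p hdeg hlead
    horth μ L hL hμL hnac
end

section
/- Define the generalised Catalan numbers d_{i,j} = C(i+j, i) − C(i+j, i−1) for natural numbers i ≤ j, with C(n,−1) = 0. Then for all natural numbers i ≤ j: Σ_{r=0}^{i} d_{i−r, i+r} · d_{j−r, j+r} = d_{i+j, i+j}. -/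
/-- The generalised Catalan number `d_{i,j} = C(i+j, i) − C(i+j, i−1)`,
with the convention `C(n, −1) = 0` (relevant for `i = 0`). -/
def genCatalan (i j : ℕ) : ℤ :=
  ((i + j).choose i : ℤ) - if i = 0 then 0 else ((i + j).choose (i - 1) : ℤ)

/-!
Since `d_{n-r, n+r} = C(2n, n+r) - C(2n, n+r+1)`, each summand expands into four products of
entries of rows `2i` and `2j` of Pascal's triangle. Folding by the symmetry of both rows, the
two "diagonal" products together make up the Vandermonde convolution `C(2(i+j), i+j)` and the
two "cross" products the convolution `C(2(i+j), i+j+1)`; their difference is `d_{i+j, i+j}`.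
-/

open Finset

theorem Nat.sum_range_choose_mul_choose_add (n m p : ℕ) :
    ∑ t ∈ range (n + 1), n.choose t * m.choose (p + t) = (n + m).choose (n + p) := by
  have beyond_top : ∀ x ∈ range p, n.choose (n + 1 + x) * m.choose (n + p - (n + 1 + x)) = 0 :=
    fun x _ => by rw [Nat.choose_eq_zero_of_lt (by omega), zero_mul]
  rw [Nat.add_choose_eq, Nat.sum_antidiagonal_eq_sum_range_succ_mk,
    show (n + p).succ = n + 1 + p by omega, sum_range_add _ (n + 1) p, sum_eq_zero beyond_top,
    add_zero]
  conv_rhs => rw [← sum_range_reflect]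
  refine sum_congr rfl fun t ht => ?_
  have ht : t ≤ n := Nat.lt_succ_iff.mp (mem_range.mp ht)
  rw [Nat.add_sub_cancel, Nat.choose_symm ht, show n + p - (n - t) = p + t by omega]

theorem genCatalan_sub_add (n r : ℕ) (h : r ≤ n) :
    genCatalan (n - r) (n + r) = (2 * n).choose (n + r) - (2 * n).choose (n + r + 1) := by
  rw [genCatalan, show n - r + (n + r) = 2 * n by omega,
    Nat.choose_symm_of_eq_add (show 2 * n = n - r + (n + r) by omega)]
  split_ifs with hr
  · rw [Nat.choose_eq_zero_of_lt (by omega : 2 * n < n + r + 1), Nat.cast_zero]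
  · rw [Nat.choose_symm_of_eq_add (show 2 * n = n - r - 1 + (n + r + 1) by omega)]

theorem sum_centralChoose_mul_centralChoose (i j k : ℕ) (hi : i ≤ j + k) (hk : k ≤ j + 1) :
    ∑ r ∈ range (i + 1),
      ((2 * i).choose (i + r) * (2 * j).choose (j + r + k) +
        (2 * i).choose (i + r + 1) * (2 * j).choose (j + r + 1 - k)) =
      (2 * (i + j)).choose (i + j + k) := by
  set p := j + k - i
  have lower : ∀ r ∈ range i, (2 * i).choose (i + r + 1) * (2 * j).choose (j + r + 1 - k) =
      (2 * i).choose (i - 1 - r) * (2 * j).choose (p + (i - 1 - r)) := fun r hr => by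
    have hr := mem_range.mp hr
    rw [Nat.choose_symm_of_eq_add (show 2 * i = i + r + 1 + (i - 1 - r) by omega),
      Nat.choose_symm_of_eq_add (show 2 * j = j + r + 1 - k + (p + (i - 1 - r)) by omega)]
  have upper : ∀ r ∈ range (i + 1), (2 * i).choose (i + r) * (2 * j).choose (j + r + k) =
      (2 * i).choose (i + r) * (2 * j).choose (p + (i + r)) := fun r _ => by
    rw [show p + (i + r) = j + r + k by omega]
  calc _ = ∑ r ∈ range i, (2 * i).choose (i + r + 1) * (2 * j).choose (j + r + 1 - k) +
        ∑ r ∈ range (i + 1), (2 * i).choose (i + r) * (2 * j).choose (j + r + k) := by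
        rw [sum_add_distrib, add_comm]
        congr 1
        rw [sum_range_succ, Nat.choose_eq_zero_of_lt (by omega : 2 * i < i + i + 1), zero_mul,
          add_zero]
    _ = ∑ t ∈ range (2 * i + 1), (2 * i).choose t * (2 * j).choose (p + t) := by
        rw [sum_congr rfl lower, sum_congr rfl upper,
          sum_range_reflect (fun t => (2 * i).choose t * (2 * j).choose (p + t)) i,
          show 2 * i + 1 = i + (i + 1) by omega, sum_range_add _ i (i + 1)]
    _ = _ := by
        rw [Nat.sum_range_choose_mul_choose_add]
        congr 1 <;> omega

/-- For all natural numbers `i ≤ j`: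
`Σ_{r=0}^{i} d_{i−r, i+r} · d_{j−r, j+r} = d_{i+j, i+j}`. -/
theorem sum_genCatalan_mul_genCatalan (i j : ℕ) (hij : i ≤ j) :
    ∑ r ∈ Finset.range (i + 1), genCatalan (i - r) (i + r) * genCatalan (j - r) (j + r) =
      genCatalan (i + j) (i + j) := by
  have diagonal := sum_centralChoose_mul_centralChoose i j 0 (by omega) (by omega)
  have cross := sum_centralChoose_mul_centralChoose i j 1 (by omega) (by omega)
  simp only [add_zero, Nat.sub_zero, Nat.add_sub_cancel] at diagonal cross
  have expand : ∀ r ∈ range (i + 1), genCatalan (i - r) (i + r) * genCatalan (j - r) (j + r) =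
      (((2 * i).choose (i + r) * (2 * j).choose (j + r) +
          (2 * i).choose (i + r + 1) * (2 * j).choose (j + r + 1) : ℕ) : ℤ) -
        (((2 * i).choose (i + r) * (2 * j).choose (j + r + 1) +
          (2 * i).choose (i + r + 1) * (2 * j).choose (j + r) : ℕ) : ℤ) := fun r hr => by
    have hr : r ≤ i := Nat.lt_succ_iff.mp (mem_range.mp hr)
    rw [genCatalan_sub_add i r hr, genCatalan_sub_add j r (hr.trans hij)]
    push_cast
    ring
  rw [sum_congr rfl expand, sum_sub_distrib, ← Nat.cast_sum, ← Nat.cast_sum, diagonal, cross]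
  simpa using (genCatalan_sub_add (i + j) 0 (Nat.zero_le _)).symm
end

section
/- Define the generalised Catalan numbers d_{i,j} = C(i+j, i) − C(i+j, i−1) for natural numbers i ≤ j, with C(n,−1) = 0. Then for all natural numbers i ≤ j: Σ_{r=0}^{i} d_{i−r, i+1+r} · d_{j−r, j+1+r} = d_{i+j+1, i+j+1}. -/
open Finset

/-- The ballot difference `C(n, k) − C(n, k − 1)`, written via Pascal's rule so that no case
split at `k = 0` is needed. -/
def ballotDiff (n k : ℕ) : ℤ := 2 * n.choose k - (n + 1).choose k

lemma genCatalan_eq_ballotDiff (i j : ℕ) : genCatalan i j = ballotDiff (i + j) i := by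
  rcases i with _ | m
  · simp [genCatalan, ballotDiff]
  · simp only [genCatalan, ballotDiff, Nat.add_sub_cancel, if_neg m.succ_ne_zero,
      Nat.choose_succ_succ' (m + 1 + j) m]
    push_cast
    ring

lemma ballotDiff_reflect {n k : ℕ} (hk : k ≤ n + 1) :
    ballotDiff n (n + 1 - k) = -ballotDiff n k := by
  rcases k with _ | m
  · simp [ballotDiff]
  · have hn : n.choose (n + 1 - (m + 1)) = n.choose m := by
      rw [Nat.add_sub_add_right, Nat.choose_symm (by omega)]
    simp only [ballotDiff, hn, Nat.choose_symm hk, Nat.choose_succ_succ']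
    push_cast
    ring

lemma ballotDiff_central (m : ℕ) : ballotDiff (2 * m + 1) (m + 1) = 0 := by
  have h := ballotDiff_reflect (n := 2 * m + 1) (k := m + 1) (by omega)
  rw [show 2 * m + 1 + 1 - (m + 1) = m + 1 by omega] at h
  omega

lemma ballotDiff_mul_ballotDiff_reflect {p c s : ℕ} (hs : s ≤ p + 1) :
    ballotDiff p (p + 1 - s) * ballotDiff (p + 2 * c) (c + (p + 1 - s))
      = ballotDiff p s * ballotDiff (p + 2 * c) (c + s) := by
  rw [show c + (p + 1 - s) = p + 2 * c + 1 - (c + s) by omega, ballotDiff_reflect hs,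
    ballotDiff_reflect (by omega), neg_mul_neg]

lemma sum_range_two_mul_add_one_of_reflect {M : Type*} [AddCommMonoid M] {f : ℕ → M} {m : ℕ}
    (hf : ∀ s ≤ 2 * m, f (2 * m - s) = f s) :
    ∑ s ∈ range (2 * m + 1), f s = 2 • ∑ s ∈ range m, f s + f m := by
  have hupper : ∑ s ∈ range m, f (m + (s + 1)) = ∑ s ∈ range m, f s := by
    rw [← sum_range_reflect f]
    refine sum_congr rfl fun s hs => ?_
    rw [mem_range] at hs
    rw [← hf (m - 1 - s) (by omega), show 2 * m - (m - 1 - s) = m + (s + 1) by omega]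
  rw [show 2 * m + 1 = m + (m + 1) by omega, sum_range_add, sum_range_succ', hupper, add_zero,
    two_nsmul, add_assoc]

lemma sum_range_choose_mul_choose_add {p N : ℕ} (q c : ℕ) (hp : p < N) :
    ∑ s ∈ range N, p.choose s * q.choose (c + s) = (p + q).choose (c + p) := by
  have hN : ∑ s ∈ range N, p.choose s * q.choose (c + s)
      = ∑ s ∈ range (p + 1), p.choose s * q.choose (c + s) := by
    refine (sum_subset (range_subset_range.2 hp) fun s _ hs => ?_).symm
    rw [Nat.choose_eq_zero_of_lt (by simpa using hs), zero_mul]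
  have hreflect : ∑ s ∈ range (p + 1), p.choose s * q.choose (c + s)
      = ∑ s ∈ range (p + 1), p.choose s * q.choose (c + p - s) := by
    rw [← sum_range_reflect (fun s => p.choose s * q.choose (c + p - s))]
    refine sum_congr rfl fun s hs => ?_
    rw [mem_range] at hs
    rw [show p + 1 - 1 - s = p - s by omega, show c + p - (p - s) = c + s by omega,
      Nat.choose_symm (by omega)]
  have hcp : ∑ s ∈ range (p + 1), p.choose s * q.choose (c + p - s)
      = ∑ s ∈ range (c + p + 1), p.choose s * q.choose (c + p - s) := by
    refine sum_subset (range_subset_range.2 (by omega)) fun s _ hs => ?_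
    rw [Nat.choose_eq_zero_of_lt (by simpa using hs), zero_mul]
  rw [hN, hreflect, hcp, Nat.add_choose_eq, Nat.sum_antidiagonal_eq_sum_range_succ_mk]

lemma sum_range_ballotDiff_mul_ballotDiff (p q c : ℕ) :
    ∑ s ∈ range (p + 2), ballotDiff p s * ballotDiff q (c + s)
      = 4 * (p + q).choose (c + p) - (p + q + 2).choose (c + p + 1) := by
  have vandermonde : ∀ p' q', p' ≤ p + 1 →
      ∑ s ∈ range (p + 2), (p'.choose s : ℤ) * q'.choose (c + s) = (p' + q').choose (c + p') :=
    fun p' q' hp' => by exact_mod_cast sum_range_choose_mul_choose_add q' c (by omega)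
  simp only [ballotDiff, sub_mul, mul_sub, sum_sub_distrib, mul_assoc, mul_left_comm _ (2 : ℤ),
    ← mul_sum, vandermonde p q le_self_add, vandermonde p (q + 1) le_self_add,
    vandermonde (p + 1) q le_rfl, vandermonde (p + 1) (q + 1) le_rfl]
  rw [show p + 1 + (q + 1) = (p + q + 1) + 1 by omega, show c + (p + 1) = (c + p) + 1 by omega,
    Nat.choose_succ_succ' (p + q + 1), show p + (q + 1) = p + q + 1 by omega,
    show p + 1 + q = p + q + 1 by omega, Nat.choose_succ_succ' (p + q) (c + p)]
  push_cast
  ring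

lemma sum_range_ballotDiff_mul_ballotDiff_central (i c : ℕ) :
    ∑ s ∈ range (2 * i + 3), ballotDiff (2 * i + 1) s * ballotDiff (2 * i + 1 + 2 * c) (c + s)
      = 2 * ballotDiff (2 * (2 * i + c + 1)) (2 * i + c + 1) := by
  set n := 2 * i + c + 1
  have hpascal : (2 * n + 2).choose (n + 1) = 2 * (2 * n + 1).choose n := by
    rw [Nat.choose_succ_succ', Nat.choose_symm_half]
    ring
  rw [sum_range_ballotDiff_mul_ballotDiff, show 2 * i + 1 + (2 * i + 1 + 2 * c) = 2 * n by omega,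
    show c + (2 * i + 1) = n by omega, hpascal, ballotDiff]
  push_cast
  ring

/-- For all natural numbers `i ≤ j`:
`Σ_{r=0}^{i} d_{i−r, i+1+r} · d_{j−r, j+1+r} = d_{i+j+1, i+j+1}`. -/
theorem sum_genCatalan_mul_genCatalan_shifted (i j : ℕ) (hij : i ≤ j) :
    ∑ r ∈ Finset.range (i + 1),
        genCatalan (i - r) (i + 1 + r) * genCatalan (j - r) (j + 1 + r) =
      genCatalan (i + j + 1) (i + j + 1) := by
  obtain ⟨c, rfl⟩ := Nat.exists_eq_add_of_le hij
  set f : ℕ → ℤ := fun s => ballotDiff (2 * i + 1) s * ballotDiff (2 * i + 1 + 2 * c) (c + s)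
  have hlhs : ∑ r ∈ range (i + 1),
      genCatalan (i - r) (i + 1 + r) * genCatalan (i + c - r) (i + c + 1 + r)
        = ∑ s ∈ range (i + 1), f s := by
    rw [← sum_range_reflect f]
    refine sum_congr rfl fun r hr => ?_
    rw [mem_range] at hr
    simp only [f, genCatalan_eq_ballotDiff]
    congr 2 <;> omega
  have hsymm : ∀ s ≤ 2 * (i + 1), f (2 * (i + 1) - s) = f s := fun s hs =>
    show 2 * (i + 1) = 2 * i + 1 + 1 by ring ▸ ballotDiff_mul_ballotDiff_reflect (by omega)
  have hcentre : f (i + 1) = 0 := by simp [f, ballotDiff_central]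
  have hfull := sum_range_two_mul_add_one_of_reflect hsymm
  rw [show 2 * (i + 1) + 1 = 2 * i + 3 by ring, sum_range_ballotDiff_mul_ballotDiff_central,
    hcentre, add_zero, two_nsmul] at hfull
  rw [hlhs, genCatalan_eq_ballotDiff, show i + (i + c) + 1 = 2 * i + c + 1 by ring, ← two_mul]
  omega
end

section
/- For every natural number k, the k-th moment of the Marchenko–Pastur law equals the k-th Catalan number: ∫_0^4 x^k · (√(x(4−x))/(2πx)) dx = C(2k, k) − C(2k, k−1). -/
/-!
On `(0, 4)` the integrand is `x ^ (k + 1/2 - 1) (4 - x) ^ (3/2 - 1) / (2π)`, so the moment is the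
scaled Beta integral `4 ^ (k + 1) B(k + 1/2, 3/2) / (2π)`. With `Γ(k + 1/2) = (2k-1)‼ √π / 2^k` it
equals `2^k (2k-1)‼ / (k+1)!`, which is the Catalan number because `(2k)! = (2k-1)‼ 2^k k!` and
`(k+1) Cat k = C(2k, k)`. Finally `C(2k, k-1) = C(2k, k) k / (k+1)` turns `Cat k` into
`C(2k, k) - C(2k, k-1)`.
-/

open MeasureTheory Nat Real

namespace Real

theorem integral_rpow_mul_rpow_sub_eq_Gamma {a s t : ℝ} (ha : 0 < a) (hs : 0 < s) (ht : 0 < t) :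
    ∫ x in 0..a, x ^ (s - 1) * (a - x) ^ (t - 1) =
      a ^ (s + t - 1) * (Gamma s * Gamma t / Gamma (s + t)) := by
  have hst : Gamma (s + t) ≠ 0 := (Gamma_pos_of_pos (add_pos hs ht)).ne'
  have hbeta : ((Gamma s * Gamma t / Gamma (s + t) : ℝ) : ℂ) = Complex.betaIntegral s t := by
    rw [Complex.ofReal_div, div_eq_iff (by exact_mod_cast hst), mul_comm (Complex.betaIntegral _ _),
      Complex.ofReal_mul, ← Complex.Gamma_ofReal, ← Complex.Gamma_ofReal, ← Complex.Gamma_ofReal,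
      Complex.ofReal_add, Complex.Gamma_mul_Gamma_eq_betaIntegral (by simpa) (by simpa)]
  rw [← Complex.ofReal_inj, ← intervalIntegral.integral_ofReal, Complex.ofReal_mul,
    Complex.ofReal_cpow ha.le, hbeta, Complex.ofReal_sub, Complex.ofReal_add, Complex.ofReal_one,
    ← Complex.betaIntegral_scaled _ _ ha]
  refine intervalIntegral.integral_congr fun x hx => ?_
  rw [Set.uIcc_of_le ha.le] at hx
  rw [Complex.ofReal_mul, Complex.ofReal_cpow hx.1, Complex.ofReal_cpow (sub_nonneg.mpr hx.2)]
  push_cast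
  rfl

end Real

theorem catalan_mul_factorial_mul_factorial_succ (n : ℕ) :
    catalan n * n ! * (n + 1)! = (2 * n)! := by
  rw [Nat.factorial_succ, ← Nat.choose_mul_factorial_mul_factorial (by omega : n ≤ 2 * n),
    show 2 * n - n = n by omega, ← Nat.centralBinom_eq_two_mul_choose,
    ← succ_mul_catalan_eq_centralBinom]
  ring

theorem succ_factorial_mul_catalan (n : ℕ) : (n + 1)! * catalan n = 2 ^ n * (2 * n - 1)‼ := by
  rcases n with _ | m
  · simp
  refine Nat.eq_of_mul_eq_mul_left (m + 1).factorial_pos ?_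
  calc (m + 1)! * ((m + 1 + 1)! * catalan (m + 1))
      = (2 * (m + 1))! := by rw [← catalan_mul_factorial_mul_factorial_succ]; ring
    _ = (m + 1)! * (2 ^ (m + 1) * (2 * (m + 1) - 1)‼) := by
      rw [show 2 * (m + 1) = 2 * m + 1 + 1 by ring, factorial_eq_mul_doubleFactorial,
        show 2 * m + 1 + 1 = 2 * (m + 1) by ring, doubleFactorial_two_mul]
      simp only [show 2 * (m + 1) - 1 = 2 * m + 1 by omega]
      ring

theorem cast_catalan_eq_choose_sub_choose (n : ℕ) :
    (catalan n : ℝ) = (2 * n).choose n - if n = 0 then 0 else ((2 * n).choose (n - 1) : ℝ) := by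
  rcases n with _ | m
  · simp
  have hcat := succ_mul_catalan_eq_centralBinom (m + 1)
  have hsucc := Nat.choose_succ_right_eq (2 * (m + 1)) m
  rw [Nat.centralBinom_eq_two_mul_choose] at hcat
  rw [show 2 * (m + 1) - m = m + 2 by omega] at hsucc
  rw [if_neg m.succ_ne_zero, Nat.add_sub_cancel]
  have hm : ((m + 1 + 1 : ℕ) : ℝ) ≠ 0 := by positivity
  refine mul_left_cancel₀ hm ?_
  have hcat' : ((m + 1 + 1 : ℕ) : ℝ) * catalan (m + 1) = (2 * (m + 1)).choose (m + 1) := by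
    exact_mod_cast hcat
  have hsucc' : ((2 * (m + 1)).choose (m + 1) : ℝ) * (m + 1) =
      (2 * (m + 1)).choose m * (m + 2) := by
    exact_mod_cast hsucc
  push_cast at hcat' ⊢
  linear_combination hcat' - hsucc'

theorem pow_mul_marchenkoPastur_density_eq {x : ℝ} (hx : x ∈ Set.Ioo 0 4) (k : ℕ) :
    x ^ k * (√(x * (4 - x)) / (2 * π * x)) =
      x ^ ((k + 1 / 2 : ℝ) - 1) * (4 - x) ^ ((3 / 2 : ℝ) - 1) / (2 * π) := by
  obtain ⟨hx0, hx4⟩ := hx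
  rw [sqrt_eq_rpow, mul_rpow hx0.le (by linarith), ← rpow_natCast, rpow_sub hx0, rpow_add hx0,
    rpow_one]
  norm_num
  field_simp

/-- The `k`-th moment of the Marchenko–Pastur law equals the `k`-th Catalan number
`C(2k, k) − C(2k, k−1)` (with the convention `C(0, −1) = 0`). -/
theorem marchenkoPastur_moment_eq_catalan (k : ℕ) :
    ∫ x in Set.Ioo (0 : ℝ) 4, x ^ k * (Real.sqrt (x * (4 - x)) / (2 * Real.pi * x)) =
      ((2 * k).choose k : ℝ) - if k = 0 then 0 else ((2 * k).choose (k - 1) : ℝ) := by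
  rw [← cast_catalan_eq_choose_sub_choose,
    setIntegral_congr_fun measurableSet_Ioo fun x hx => pow_mul_marchenkoPastur_density_eq hx k,
    ← integral_Ioc_eq_integral_Ioo, ← intervalIntegral.integral_of_le (by norm_num),
    intervalIntegral.integral_div, integral_rpow_mul_rpow_sub_eq_Gamma (by norm_num) (by positivity)
      (by norm_num)]
  have hexp : (k + 1 / 2 : ℝ) + 3 / 2 - 1 = (k + 1 : ℕ) := by push_cast; ring
  have hsum : (k + 1 / 2 : ℝ) + 3 / 2 = (k + 1 : ℕ) + 1 := by push_cast; ring
  have hthree : (3 / 2 : ℝ) = (1 : ℕ) + 1 / 2 := by norm_num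
  have hcat : ((k + 1)! * catalan k : ℝ) = 2 ^ k * (2 * k - 1)‼ := by
    exact_mod_cast succ_factorial_mul_catalan k
  rw [hexp, rpow_natCast, hsum, Gamma_nat_eq_factorial, hthree, Gamma_nat_add_half,
    Gamma_nat_add_half, eq_comm, ← mul_right_inj' (by positivity : ((k + 1)! : ℝ) ≠ 0), hcat]
  field_simp
  rw [sq_sqrt pi_pos.le, show (4 : ℝ) = 2 ^ 2 by norm_num, ← pow_mul, ← pow_mul]
  norm_num
  ring
end
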